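/- The k-algebra R generated by elements g and x subject to the relations g^{mn} = 1, x^n = g^n - 1, and xg = qgx has dimension mn^2 over k, and the set {g^i x^j : 0 ≤ i ≤ mn-1, 0 ≤ j ≤ n-1} is a k-basis of R. -/

import Mathlib

open scoped Fin.NatCast Fin.IntCast Fin.CommRing
noncomputable section RadfordAux
namespace RadfordAux
set_option linter.unusedSectionVars false
set_option maxHeartbeats 800000

variable {K : Type*} [Field K]

lemma pow_val_natCast {N : ℕ} [NeZero N] (u : K) (hu : u ^ N = 1) (a : ℕ) :
    u ^ ((a : Fin N) : ℕ) = u ^ a := by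
  rw [Fin.val_natCast]
  exact (pow_eq_pow_mod a hu).symm

lemma pow_val_add {N : ℕ} [NeZero N] (u : K) (hu : u ^ N = 1) (a b : Fin N) :
    u ^ ((a + b : Fin N) : ℕ) = u ^ (a : ℕ) * u ^ (b : ℕ) := by
  have h1 : (((a : ℕ) + (b : ℕ) : ℕ) : Fin N) = a + b := by
    push_cast [Fin.cast_val_eq_self]; ring
  rw [← h1, pow_val_natCast u hu, pow_add]

lemma pow_val_sub {N : ℕ} [NeZero N] (u : K) (hu : u ^ N = 1) (a b : Fin N) :
    u ^ ((a - b : Fin N) : ℕ) * u ^ (b : ℕ) = u ^ (a : ℕ) := by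
  rw [← pow_val_add u hu, sub_add_cancel]

lemma fin_sub_natCast_val {n : ℕ} [NeZero n] (d : Fin n) {j : ℕ} (hj : j ≤ (d : ℕ)) :
    ((d - (j : Fin n) : Fin n) : ℕ) = (d : ℕ) - j := by
  have hlt : (d : ℕ) - j < n := by omega
  have h2 : ((((d : ℕ) - j : ℕ) : Fin n)) + (j : Fin n) = d := by
    rw [← Nat.cast_add, show ((d : ℕ) - j) + j = (d : ℕ) by omega, Fin.cast_val_eq_self]
  have h1 : (((d : ℕ) - j : ℕ) : Fin n) = d - (j : Fin n) := eq_sub_of_add_eq h2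
  rw [← h1, Fin.val_natCast, Nat.mod_eq_of_lt hlt]

abbrev W (K : Type*) [Field K] (m n : ℕ) := (Fin (m * n) × Fin n) → K

variable (q : K) (m n : ℕ) [NeZero n] [NeZero (m * n)]

def lastF : Fin n := ⟨n - 1, Nat.sub_lt (Nat.pos_of_ne_zero (NeZero.ne n)) one_pos⟩

def G : W K m n →ₗ[K] W K m n := LinearMap.funLeft K K (fun p => (p.1 - 1, p.2))

def X : W K m n →ₗ[K] W K m n where
  toFun f p := if p.2 = 0
    then q ^ (p.1 : ℕ) * (f (p.1 - (n : Fin (m * n)), lastF n) - f (p.1, lastF n))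
    else q ^ (p.1 : ℕ) * f (p.1, p.2 - 1)
  map_add' f g := by
    funext p
    by_cases h : p.2 = 0 <;> simp [h] <;> ring
  map_smul' c f := by
    funext p
    by_cases h : p.2 = 0 <;> simp [h] <;> ring

variable {q m n}

lemma G_apply (f : W K m n) (p : Fin (m * n) × Fin n) :
    G (K := K) m n f p = f (p.1 - 1, p.2) := rfl

lemma X_apply (f : W K m n) (p : Fin (m * n) × Fin n) :
    X q m n f p = if p.2 = 0
      then q ^ (p.1 : ℕ) * (f (p.1 - (n : Fin (m * n)), lastF n) - f (p.1, lastF n))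
      else q ^ (p.1 : ℕ) * f (p.1, p.2 - 1) := rfl

lemma Gpow_apply (k : ℕ) (f : W K m n) (p : Fin (m * n) × Fin n) :
    ((G (K := K) m n) ^ k) f p = f (p.1 - (k : Fin (m * n)), p.2) := by
  induction k generalizing f p with
  | zero => simp
  | succ k ih =>
    rw [pow_succ', Module.End.mul_apply, G_apply, ih]
    congr 2
    push_cast
    ring

lemma Gpow_mn : (G (K := K) m n) ^ (m * n) = 1 := by
  apply LinearMap.ext; intro f
  funext p
  rw [Gpow_apply]
  simp [Fin.natCast_self]

lemma q_pow_mn (hq1 : q ^ n = 1) : q ^ (m * n) = 1 := by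
  rw [pow_mul', hq1, one_pow]

/-- Partial formula for powers of `X` before reduction is needed. -/
lemma Xpow_apply_of_le (hq1 : q ^ n = 1) (j : ℕ) (f : W K m n) (c : Fin (m * n))
    (d : Fin n) (hj : j ≤ (d : ℕ)) :
    ((X q m n) ^ j) f (c, d) = q ^ (j * (c : ℕ)) * f (c, d - (j : Fin n)) := by
  induction j generalizing f d with
  | zero => simp
  | succ j ih =>
    rw [pow_succ, Module.End.mul_apply, ih _ _ (by omega), X_apply]
    have hval : ((d - (j : Fin n) : Fin n) : ℕ) = (d : ℕ) - j :=
      fin_sub_natCast_val d (by omega)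
    have hne : (d - (j : Fin n) : Fin n) ≠ 0 := by
      intro h
      rw [h] at hval
      simp at hval
      omega
    rw [if_neg hne]
    have harg : (d - (j : Fin n) - 1 : Fin n) = d - ((j + 1 : ℕ) : Fin n) := by
      push_cast
      ring
    rw [harg]
    show q ^ (j * (c : ℕ)) * (q ^ (c : ℕ) * f (c, d - ((j + 1 : ℕ) : Fin n))) =
      q ^ ((j + 1) * (c : ℕ)) * f (c, d - ((j + 1 : ℕ) : Fin n))
    ring

/-- relation `X G = q • (G X)` -/
lemma XG_rel (hq1 : q ^ n = 1) :
    (X q m n) * (G (K := K) m n) = q • ((G (K := K) m n) * (X q m n)) := by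
  have hqmn : q ^ (m * n) = 1 := q_pow_mn hq1
  have h1 : q ^ ((1 : Fin (m * n)) : ℕ) = q := by
    rw [← Nat.cast_one (R := Fin (m * n)), pow_val_natCast q hqmn, pow_one]
  have hq1' : ∀ c : Fin (m * n), q * q ^ ((c - 1 : Fin (m * n)) : ℕ) = q ^ (c : ℕ) := by
    intro c
    have h2 := pow_val_sub q hqmn c 1
    rw [h1] at h2
    rw [mul_comm]; exact h2
  apply LinearMap.ext; intro f
  funext p
  obtain ⟨c, d⟩ := p
  simp only [Module.End.mul_apply, LinearMap.smul_apply, Pi.smul_apply, smul_eq_mul,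
    X_apply, G_apply]
  by_cases h : d = 0
  · simp only [h, if_true, reduceIte]
    have harg : (c - (n : Fin (m * n)) - 1) = (c - 1 - (n : Fin (m * n))) := by ring
    rw [harg, ← hq1' c]
    ring
  · simp only [h, if_false, reduceIte]
    rw [← hq1' c]
    ring

/-- relation `X^n = G^n - 1` -/
lemma Xpow_n_rel (hq1 : q ^ n = 1) :
    (X q m n) ^ n = (G (K := K) m n) ^ n - 1 := by
  have hqmn : q ^ (m * n) = 1 := q_pow_mn hq1
  have hnpos : 0 < n := Nat.pos_of_ne_zero (NeZero.ne n)
  apply LinearMap.ext; intro f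
  funext p
  obtain ⟨c, d⟩ := p
  have hd : (d : ℕ) < n := d.isLt
  set k : ℕ := n - (d : ℕ) - 1 with hk
  have hsplit : n = (d : ℕ) + (k + 1) := by omega
  rw [LinearMap.sub_apply, Module.End.one_apply, Pi.sub_apply, Gpow_apply]
  have hX : (X q m n) ^ n = (X q m n) ^ ((d : ℕ)) * (X q m n) ^ (k + 1) := by
    rw [← pow_add, ← hsplit]
  rw [hX, Module.End.mul_apply,
    Xpow_apply_of_le hq1 (d : ℕ) _ c d (le_refl _)]
  rw [Fin.cast_val_eq_self, sub_self]
  rw [pow_succ', Module.End.mul_apply, X_apply]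
  rw [if_pos rfl]
  have hlast : k ≤ ((lastF n : Fin n) : ℕ) := by
    simp [lastF]; omega
  rw [Xpow_apply_of_le hq1 k _ _ _ hlast, Xpow_apply_of_le hq1 k _ _ _ hlast]
  have hdd : (lastF n - (k : Fin n) : Fin n) = d := by
    rw [Fin.ext_iff, fin_sub_natCast_val _ hlast]
    simp [lastF]; omega
  rw [hdd]
  have hsub : q ^ ((c - (n : Fin (m * n)) : Fin (m * n)) : ℕ) = q ^ (c : ℕ) := by
    have h2 := pow_val_sub q hqmn c (n : Fin (m * n))
    rw [pow_val_natCast q hqmn n, hq1, mul_one] at h2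
    exact h2
  have hkey : q ^ ((d : ℕ) * (c : ℕ)) * (q ^ (c : ℕ) * q ^ (k * (c : ℕ))) = 1 := by
    rw [← pow_add, ← pow_add]
    rw [show (d : ℕ) * (c : ℕ) + ((c : ℕ) + k * (c : ℕ))
        = ((d : ℕ) + (k + 1)) * (c : ℕ) by ring]
    rw [← hsplit, pow_mul, hq1, one_pow]
  have hexp : q ^ (k * ((c - (n : Fin (m * n)) : Fin (m * n)) : ℕ)) = q ^ (k * (c : ℕ)) := by
    rw [mul_comm k, pow_mul, hsub, ← pow_mul, mul_comm]
  rw [hexp]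
  linear_combination (f (c - (n : Fin (m * n)), d) - f (c, d)) * hkey

lemma fin_sub_one_val {n : ℕ} [NeZero n] (e : Fin n) (he : (e : ℕ) ≠ 0) :
    ((e - 1 : Fin n) : ℕ) = (e : ℕ) - 1 := by
  have h := fin_sub_natCast_val e (j := 1) (by omega)
  rwa [Nat.cast_one] at h

variable (q m n)

/-- The representation of the free algebra on `W`. -/
def psi : FreeAlgebra K Bool →ₐ[K] Module.End K (W K m n) :=
  FreeAlgebra.lift K (fun b => if b then G (K := K) m n else X q m n)

variable {q m n}

lemma psi_true : psi q m n (FreeAlgebra.ι K true) = G (K := K) m n := by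
  simp [psi]

lemma psi_false : psi q m n (FreeAlgebra.ι K false) = X q m n := by
  simp [psi]

/-- applying `X` to a basis vector below the top row -/
lemma X_single (b : Fin n) (hb : (b : ℕ) + 1 < n) :
    X q m n (Pi.single ((0 : Fin (m * n)), b) (1 : K))
      = Pi.single ((0 : Fin (m * n)), ⟨(b : ℕ) + 1, hb⟩) (1 : K) := by
  funext p
  obtain ⟨c, d⟩ := p
  rw [X_apply]
  by_cases h : d = 0
  · rw [if_pos h]
    simp only [Pi.single_apply, Prod.mk.injEq]
    have hb1 : lastF n ≠ b := by
      intro hh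
      have h' := congrArg Fin.val hh
      simp [lastF] at h'
      omega
    have hb2 : d ≠ (⟨(b : ℕ) + 1, hb⟩ : Fin n) := by
      intro hh
      have h' := congrArg Fin.val hh
      rw [h] at h'
      simp at h'
    rw [if_neg (fun hh => hb1 hh.2), if_neg (fun hh => hb1 hh.2),
      if_neg (fun hh => hb2 hh.2)]
    ring
  · rw [if_neg h]
    simp only [Pi.single_apply, Prod.mk.injEq]
    have hdne : (d : ℕ) ≠ 0 := fun hcon => h (Fin.ext hcon)
    have hdv : ((d - 1 : Fin n) : ℕ) = (d : ℕ) - 1 := fin_sub_one_val d hdne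
    have hiff : (d - 1 = b) ↔ (d = (⟨(b : ℕ) + 1, hb⟩ : Fin n)) := by
      rw [Fin.ext_iff, Fin.ext_iff, hdv]
      have hlt := d.isLt
      change (d : ℕ) - 1 = (b : ℕ) ↔ (d : ℕ) = (b : ℕ) + 1
      omega
    rw [if_congr (and_congr_right fun _ => hiff) rfl rfl]
    split_ifs with hcase
    · rw [hcase.1]
      simp
    · ring

/-- applying powers of `X` to the base vector -/
lemma Xpow_single (j : ℕ) (hj : j < n) :
    ((X q m n) ^ j) (Pi.single ((0 : Fin (m * n)), (0 : Fin n)) (1 : K))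
      = Pi.single ((0 : Fin (m * n)), (⟨j, hj⟩ : Fin n)) (1 : K) := by
  induction j with
  | zero =>
    simp only [pow_zero, Module.End.one_apply]
    rfl
  | succ j ih =>
    rw [pow_succ', Module.End.mul_apply, ih (by omega)]
    rw [X_single ⟨j, by omega⟩ (by simpa using hj)]

/-- applying powers of `G` to a basis vector -/
lemma Gpow_single (a : Fin (m * n)) (b : Fin n) :
    ((G (K := K) m n) ^ ((a : ℕ))) (Pi.single ((0 : Fin (m * n)), b) (1 : K))
      = Pi.single (a, b) (1 : K) := by
  funext p
  obtain ⟨c, d⟩ := p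
  rw [Gpow_apply]
  simp only [Pi.single_apply, Prod.mk.injEq, Fin.cast_val_eq_self]
  rw [if_congr (and_congr_left fun _ => sub_eq_zero) rfl rfl]

end RadfordAux


/-- The defining relations of the Radford Hopf algebra `R_{mn}(q)`:
the free algebra on two generators `g = ι true` and `x = ι false` is quotiented by
`g^{mn} = 1`, `x^n = g^n - 1` and `xg = q·gx`. -/
inductive RadfordRel (K : Type*) [Field K] (q : K) (m n : ℕ) :
    FreeAlgebra K Bool → FreeAlgebra K Bool → Prop
  | gOrder : RadfordRel K q m n ((FreeAlgebra.ι K true) ^ (m * n)) 1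
  | xPow : RadfordRel K q m n ((FreeAlgebra.ι K false) ^ n) ((FreeAlgebra.ι K true) ^ n - 1)
  | xg : RadfordRel K q m n (FreeAlgebra.ι K false * FreeAlgebra.ι K true)
      (q • (FreeAlgebra.ι K true * FreeAlgebra.ι K false))

open RadfordAux

/-- the `K`-algebra generated by `g` and `x` subject to the relations
`g^{mn} = 1`, `x^n = g^n - 1`, `xg = q·gx` has dimension `mn²` over `K`, and
`{g^i x^j : 0 ≤ i ≤ mn-1, 0 ≤ j ≤ n-1}` is a `K`-basis of it. -/
theorem radford_algebra_dim_and_basis (K : Type*) [Field K] [IsAlgClosed K]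
    (m n : ℕ) (hm : 2 ≤ m) (hn : 1 ≤ n) (hchar : ¬ (ringChar K ∣ m * n))
    (q : K) (hq : IsPrimitiveRoot q n) :
    Module.finrank K (RingQuot (RadfordRel K q m n)) = m * n ^ 2 ∧
    ∃ B : Module.Basis (Fin (m * n) × Fin n) K (RingQuot (RadfordRel K q m n)),
      ∀ p : Fin (m * n) × Fin n,
        B p = RingQuot.mkAlgHom K (RadfordRel K q m n) (FreeAlgebra.ι K true) ^ (p.1 : ℕ) *
              RingQuot.mkAlgHom K (RadfordRel K q m n) (FreeAlgebra.ι K false) ^ (p.2 : ℕ) := by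
  haveI : NeZero n := ⟨by omega⟩
  haveI : NeZero (m * n) := ⟨Nat.mul_ne_zero (by omega) (by omega)⟩
  have hq1 : q ^ n = 1 := hq.pow_eq_one
  have hrel : ∀ ⦃a b : FreeAlgebra K Bool⦄, RadfordRel K q m n a b →
      psi q m n a = psi q m n b := by
    intro a b r
    cases r with
    | gOrder => rw [map_pow, psi_true, map_one, Gpow_mn]
    | xPow => rw [map_pow, map_sub, map_pow, map_one, psi_true, psi_false, Xpow_n_rel hq1]
    | xg => rw [map_mul, map_smul, map_mul, psi_true, psi_false, XG_rel hq1]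
  set Φ : RingQuot (RadfordRel K q m n) →ₐ[K] Module.End K (W K m n) :=
    RingQuot.liftAlgHom K ⟨psi q m n, hrel⟩ with hPhi
  set g : RingQuot (RadfordRel K q m n) :=
    RingQuot.mkAlgHom K (RadfordRel K q m n) (FreeAlgebra.ι K true) with hgdef
  set x : RingQuot (RadfordRel K q m n) :=
    RingQuot.mkAlgHom K (RadfordRel K q m n) (FreeAlgebra.ι K false) with hxdef
  have hPg : Φ g = G (K := K) m n := by
    rw [hgdef, hPhi, RingQuot.liftAlgHom_mkAlgHom_apply, psi_true]
  have hPx : Φ x = X q m n := by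
    rw [hxdef, hPhi, RingQuot.liftAlgHom_mkAlgHom_apply, psi_false]
  have rg : g ^ (m * n) = 1 := by
    have h := RingQuot.mkAlgHom_rel K (RadfordRel.gOrder (K := K) (q := q) (m := m) (n := n))
    rwa [map_pow, map_one] at h
  have rx : x ^ n = g ^ n - 1 := by
    have h := RingQuot.mkAlgHom_rel K (RadfordRel.xPow (K := K) (q := q) (m := m) (n := n))
    rwa [map_pow, map_sub, map_pow, map_one] at h
  have rc : x * g = q • (g * x) := by
    have h := RingQuot.mkAlgHom_rel K (RadfordRel.xg (K := K) (q := q) (m := m) (n := n))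
    rwa [map_mul, map_smul, map_mul] at h
  set v : Fin (m * n) × Fin n → RingQuot (RadfordRel K q m n) :=
    fun p => g ^ (p.1 : ℕ) * x ^ (p.2 : ℕ) with hv
  -- linear independence via the representation
  set e₀ : W K m n := Pi.single ((0 : Fin (m * n)), (0 : Fin n)) (1 : K) with he₀
  set ev : RingQuot (RadfordRel K q m n) →ₗ[K] W K m n :=
    (LinearMap.applyₗ e₀).comp Φ.toLinearMap with hev'
  have hev : ∀ p, ev (v p) = Pi.single p 1 := by
    intro p
    obtain ⟨a, b⟩ := p
    show Φ (g ^ (a : ℕ) * x ^ (b : ℕ)) e₀ = _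
    rw [map_mul, map_pow, map_pow, hPg, hPx, Module.End.mul_apply, he₀,
      Xpow_single (b : ℕ) b.isLt]
    rw [show (⟨(b : ℕ), b.isLt⟩ : Fin n) = b from rfl, Gpow_single a b]
  have hind : LinearIndependent K v := by
    have hbasis : LinearIndependent K
        (fun p : Fin (m * n) × Fin n => (Pi.single p 1 : W K m n)) := by
      have h := (Pi.basisFun K (Fin (m * n) × Fin n)).linearIndependent
      have heq : ⇑(Pi.basisFun K (Fin (m * n) × Fin n))
          = fun p => (Pi.single p 1 : W K m n) := by
        funext p; exact Pi.basisFun_apply K _ p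
      rwa [heq] at h
    apply LinearIndependent.of_comp ev
    rw [show (⇑ev ∘ v) = fun p => (Pi.single p 1 : W K m n) from funext hev]
    exact hbasis
  -- spanning
  have gpow_mod : ∀ a : ℕ, g ^ a = g ^ ((a : Fin (m * n)) : ℕ) := by
    intro a; rw [Fin.val_natCast]; exact pow_eq_pow_mod a rg
  have xpow_g : ∀ j : ℕ, x ^ j * g = q ^ j • (g * x ^ j) := by
    intro j; induction j with
    | zero => simp
    | succ j ih =>
      calc x ^ (j + 1) * g = x ^ j * (x * g) := by rw [pow_succ, mul_assoc]
      _ = x ^ j * (q • (g * x)) := by rw [rc]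
      _ = q • ((x ^ j * g) * x) := by rw [mul_smul_comm, mul_assoc]
      _ = q • ((q ^ j • (g * x ^ j)) * x) := by rw [ih]
      _ = q ^ (j + 1) • (g * x ^ (j + 1)) := by
        rw [smul_mul_assoc, smul_smul, mul_assoc, ← pow_succ, ← pow_succ']
  set S := Submodule.span K (Set.range v) with hS
  have hmem : ∀ p, v p ∈ S := fun p => Submodule.subset_span ⟨p, rfl⟩
  have h1S : (1 : RingQuot (RadfordRel K q m n)) ∈ S := by
    have h0 : v (0, 0) = 1 := by
      rw [hv]
      show g ^ ((0 : Fin (m * n)) : ℕ) * x ^ ((0 : Fin n) : ℕ) = 1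
      rw [show ((0 : Fin (m * n)) : ℕ) = 0 from rfl, show ((0 : Fin n) : ℕ) = 0 from rfl]
      rw [pow_zero, pow_zero, mul_one]
    rw [← h0]; exact hmem _
  have hvg : ∀ p, v p * g ∈ S := by
    intro p
    have h1 : v p * g = q ^ (p.2 : ℕ) • v (p.1 + 1, p.2) := by
      rw [hv]
      show g ^ (p.1 : ℕ) * x ^ (p.2 : ℕ) * g
        = q ^ (p.2 : ℕ) • (g ^ (((p.1 + 1 : Fin (m * n))) : ℕ) * x ^ (p.2 : ℕ))
      rw [mul_assoc, xpow_g, mul_smul_comm]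
      congr 1
      rw [← mul_assoc, ← pow_succ]
      congr 1
      have h2 : (((p.1 : ℕ) + 1 : ℕ) : Fin (m * n)) = p.1 + 1 := by
        push_cast [Fin.cast_val_eq_self]; ring
      rw [gpow_mod ((p.1 : ℕ) + 1), h2]
    rw [h1]; exact S.smul_mem _ (hmem _)
  have hvx : ∀ p, v p * x ∈ S := by
    intro p
    have hb := p.2.isLt
    rcases Nat.lt_or_ge ((p.2 : ℕ) + 1) n with hlt | hge
    · have h1 : v p * x = v (p.1, p.2 + 1) := by
        rw [hv]
        show g ^ (p.1 : ℕ) * x ^ (p.2 : ℕ) * x = g ^ (p.1 : ℕ) * x ^ (((p.2 + 1 : Fin n)) : ℕ)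
        have h3 : (((p.2 : ℕ) + 1 : ℕ) : Fin n) = p.2 + 1 := by
          push_cast [Fin.cast_val_eq_self]; ring
        have h2 : ((p.2 + 1 : Fin n) : ℕ) = (p.2 : ℕ) + 1 := by
          rw [← h3, Fin.val_natCast, Nat.mod_eq_of_lt hlt]
        rw [h2, mul_assoc, pow_succ]
      rw [h1]; exact hmem _
    · have hn' : (p.2 : ℕ) + 1 = n := by omega
      have h1 : v p * x = v (p.1 + (n : Fin (m * n)), 0) - v (p.1, 0) := by
        rw [hv]
        show g ^ (p.1 : ℕ) * x ^ (p.2 : ℕ) * x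
          = g ^ (((p.1 + (n : Fin (m * n)) : Fin (m * n))) : ℕ) * x ^ ((0 : Fin n) : ℕ)
            - g ^ (p.1 : ℕ) * x ^ ((0 : Fin n) : ℕ)
        rw [show ((0 : Fin n) : ℕ) = 0 from rfl, pow_zero, mul_one, mul_one]
        rw [mul_assoc, ← pow_succ, hn', rx, mul_sub, mul_one]
        congr 1
        have h2 : (((p.1 : ℕ) + n : ℕ) : Fin (m * n)) = p.1 + (n : Fin (m * n)) := by
          push_cast [Fin.cast_val_eq_self]; ring
        rw [← pow_add, gpow_mod ((p.1 : ℕ) + n), h2]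
      rw [h1]; exact S.sub_mem (hmem _) (hmem _)
  have hmul_right : ∀ t : RingQuot (RadfordRel K q m n),
      (∀ p, v p * t ∈ S) → ∀ s ∈ S, s * t ∈ S := by
    intro t ht s hs
    have hle : S.map (LinearMap.mulRight K t) ≤ S := by
      rw [hS, Submodule.map_span, Submodule.span_le]
      rintro _ ⟨_, ⟨p, rfl⟩, rfl⟩
      exact ht p
    exact hle ⟨s, hs, rfl⟩
  have hadj : ∀ r : RingQuot (RadfordRel K q m n), r ∈ Algebra.adjoin K {g, x} := by
    intro r
    obtain ⟨y, rfl⟩ := RingQuot.mkAlgHom_surjective K (RadfordRel K q m n) r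
    have hy : y ∈ Algebra.adjoin K (Set.range (FreeAlgebra.ι K)) := by
      rw [FreeAlgebra.adjoin_range_ι]; trivial
    have h2 : RingQuot.mkAlgHom K (RadfordRel K q m n) y ∈
        (Algebra.adjoin K (Set.range (FreeAlgebra.ι K))).map
          (RingQuot.mkAlgHom K (RadfordRel K q m n)) := ⟨y, hy, rfl⟩
    rw [AlgHom.map_adjoin] at h2
    refine Algebra.adjoin_mono ?_ h2
    rintro _ ⟨_, ⟨b, rfl⟩, rfl⟩
    cases b
    · right; rfl
    · left; rfl
  have hmulall : ∀ r : RingQuot (RadfordRel K q m n), ∀ s ∈ S, s * r ∈ S := by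
    intro r
    refine Algebra.adjoin_induction
      (p := fun t _ => ∀ s ∈ S, s * t ∈ S) ?_ ?_ ?_ ?_ (hadj r)
    · intro t ht
      rcases ht with rfl | ht
      · exact hmul_right g hvg
      · rw [Set.mem_singleton_iff] at ht
        subst ht
        exact hmul_right x hvx
    · intro c s hs
      rw [Algebra.algebraMap_eq_smul_one, mul_smul_comm, mul_one]
      exact S.smul_mem c hs
    · intro a b _ _ ha hb s hs
      rw [mul_add]
      exact S.add_mem (ha s hs) (hb s hs)
    · intro a b _ _ ha hb s hs
      rw [← mul_assoc]
      exact hb _ (ha s hs)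
  have hspan_top : ⊤ ≤ Submodule.span K (Set.range v) := by
    intro r _
    have h := hmulall r 1 h1S
    rwa [one_mul] at h
  let B : Module.Basis (Fin (m * n) × Fin n) K (RingQuot (RadfordRel K q m n)) :=
    Module.Basis.mk hind hspan_top
  refine ⟨?_, ⟨B, fun p => ?_⟩⟩
  · rw [Module.finrank_eq_card_basis B, Fintype.card_prod, Fintype.card_fin, Fintype.card_fin]
    ring
  · rw [show B p = v p from Module.Basis.mk_apply hind hspan_top p]
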